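/- Let P ∈ ℕ and for each j ∈ {1,…,P} let γ_j > 0, ε_j > 0 and η_j > 0 be given, with V_j = η_j/ε_j, and let C > 0. For B ⊆ {1,…,P} with B ≠ {1,…,P} define α(B) = (C − Σ_{j∈B} γ_j ε_j)/(Σ_{j∉B} γ_j). Suppose B has at least two non-members, α(B) > 0, and j' ∉ B satisfies η_{j'}/α(B) > V_{j'} (equivalently, ε_{j'} > α(B)). Then α(B ∪ {j'}) < α(B). Consequently, if in addition α(B ∪ {j'}) > 0, then for every j ∉ B ∪ {j'} one has η_j/α(B ∪ {j'}) > η_j/α(B); that is, adding j' to the working set strictly increases the estimator variance of every other non-actively constrained portfolio. -/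

import Mathlib

/-!
Write `N = C - Σ_{j∈B} γ_j ε_j` and `D = Σ_{j∉B} γ_j`, so `α(B) = N / D`. Moving `j'` into the
working set gives `α(B ∪ {j'}) = (N - γ_{j'} ε_{j'}) / (D - γ_{j'})`: a weight `γ_{j'}` carrying
the value `ε_{j'} > α(B)` is removed from the weighted average `N / D`, which therefore drops.
The variance `η_j / α` is decreasing in `α > 0`.
-/

/-- The common allocation factor `α(B) = (C − Σ_{j∈B} γ_j ε_j)/(Σ_{j∉B} γ_j)`
for the non-actively constrained portfolios, given working set `B`. -/
noncomputable def alphaFactor {P : ℕ} (γ ε : Fin P → ℝ) (C : ℝ) (B : Finset (Fin P)) : ℝ :=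
  (C - ∑ j ∈ B, γ j * ε j) / ∑ j ∈ Bᶜ, γ j

section OrderedField

variable {K : Type*} [Field K] [LinearOrder K] [IsStrictOrderedRing K]

lemma lt_of_div_lt_div_left_of_pos {a b c : K} (ha : 0 < a) (hb : 0 < b) (h : a / b < a / c) :
    c < b :=
  have hc : 0 < c := (div_pos_iff_of_pos_left ha).mp ((div_pos ha hb).trans h)
  (div_lt_div_iff_of_pos_left ha hb hc).mp h

lemma sub_mul_div_sub_lt_div {a b c x : K} (hc : 0 < c) (hcb : c < b) (hx : a / b < x) :
    (a - c * x) / (b - c) < a / b := by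
  have hb : 0 < b := hc.trans hcb
  rw [div_lt_div_iff₀ (sub_pos.mpr hcb) hb]
  rw [div_lt_iff₀ hb] at hx
  nlinarith

end OrderedField

lemma Finset.lt_sum_of_two_le_card {ι M : Type*} [AddCommMonoid M] [PartialOrder M]
    [IsOrderedCancelAddMonoid M] {s : Finset ι} {f : ι → M}
    (hf : ∀ i ∈ s, 0 < f i) (hs : 2 ≤ s.card) {i : ι} (hi : i ∈ s) : f i < ∑ k ∈ s, f k := by
  obtain ⟨j, hj, hji⟩ := s.exists_mem_ne hs i
  exact Finset.single_lt_sum hji hi hj (hf j hj) fun k hk _ => (hf k hk).le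

lemma alphaFactor_insert {P : ℕ} (γ ε : Fin P → ℝ) (C : ℝ) {B : Finset (Fin P)} {j' : Fin P}
    (hj' : j' ∉ B) :
    alphaFactor γ ε C (insert j' B) =
      ((C - ∑ j ∈ B, γ j * ε j) - γ j' * ε j') / (∑ j ∈ Bᶜ, γ j - γ j') := by
  rw [alphaFactor, Finset.sum_insert hj', Finset.compl_insert,
    Finset.sum_erase_eq_sub (Finset.mem_compl.mpr hj'), sub_add_eq_sub_sub, sub_right_comm]

theorem adding_violated_constraint_increases_other_variances_general
    {P : ℕ} (γ ε η V : Fin P → ℝ) (C : ℝ)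
    (hγ : ∀ j, 0 < γ j) (hε : ∀ j, 0 < ε j) (hη : ∀ j, 0 < η j)
    (hV : ∀ j, V j = η j / ε j)
    (B : Finset (Fin P)) (hBtwo : 2 ≤ Bᶜ.card)
    (j' : Fin P) (hj'B : j' ∉ B)
    (hviol : V j' < η j' / alphaFactor γ ε C B) :
    alphaFactor γ ε C (insert j' B) < alphaFactor γ ε C B ∧
      (0 < alphaFactor γ ε C (insert j' B) →
        ∀ j ∉ insert j' B,
          η j / alphaFactor γ ε C B < η j / alphaFactor γ ε C (insert j' B)) := by
  rw [hV] at hviol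
  have hαε := lt_of_div_lt_div_left_of_pos (hη j') (hε j') hviol
  have hγD : γ j' < ∑ j ∈ Bᶜ, γ j :=
    Finset.lt_sum_of_two_le_card (fun j _ => hγ j) hBtwo (Finset.mem_compl.mpr hj'B)
  have hdrop : alphaFactor γ ε C (insert j' B) < alphaFactor γ ε C B := by
    rw [alphaFactor_insert γ ε C hj'B]
    exact sub_mul_div_sub_lt_div (hγ j') hγD hαε
  exact ⟨hdrop, fun hpos j _ => div_lt_div_of_pos_left (hη j) hpos hdrop⟩

/-- Adding a violated constraint `j'` to the working set strictly decreases `α`, and hence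
strictly increases the estimator variance `η_j/α` of every other non-actively
constrained portfolio. -/
theorem adding_violated_constraint_increases_other_variances
    {P : ℕ} (γ ε η V : Fin P → ℝ) (C : ℝ)
    (hγ : ∀ j, 0 < γ j) (hε : ∀ j, 0 < ε j) (hη : ∀ j, 0 < η j)
    (hV : ∀ j, V j = η j / ε j) (hC : 0 < C)
    (B : Finset (Fin P)) (hBtwo : 2 ≤ Bᶜ.card)
    (hα : 0 < alphaFactor γ ε C B)
    (j' : Fin P) (hj'B : j' ∉ B)
    (hviol : V j' < η j' / alphaFactor γ ε C B) :
    alphaFactor γ ε C (insert j' B) < alphaFactor γ ε C B ∧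
      (0 < alphaFactor γ ε C (insert j' B) →
        ∀ j ∉ insert j' B,
          η j / alphaFactor γ ε C B < η j / alphaFactor γ ε C (insert j' B)) :=
  adding_violated_constraint_increases_other_variances_general γ ε η V C hγ hε hη hV B hBtwo j' hj'B
    hviol
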